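/- arXiv:2310.07785 — 4 statements merged into one kernel-verified Lean document; each statement's English description precedes it below -/
import Mathlib

section
/- Let q : Y → X be a continuous, open, surjective map of topological spaces and let g : A → X be a continuous map. Form the pullback P = {p : Y × A // q p.1 = g p.2} with the subspace topology, and let pr : P → Y be the first projection, pr p = p.val.1. If pr is a proper map, then g is a proper map. (This is the topological analogue, for the open-surjection covers used in the paper, of Proposition: proper maps of locales descend along effective descent morphisms.) -/
/-- Topological analogue of "proper maps descend along effective descent morphisms",
for open-surjection covers: if `q : Y → X` is a continuous open surjection,
`g : A → X` is continuous, and the pullback projection `pr : P → Y` is proper,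
then `g` is proper. -/
theorem proper_descends_along_open_surjection
    {X Y A : Type*} [TopologicalSpace X] [TopologicalSpace Y] [TopologicalSpace A]
    (q : Y → X) (hq_cont : Continuous q) (hq_open : IsOpenMap q)
    (hq_surj : Function.Surjective q)
    (g : A → X) (hg_cont : Continuous g)
    (pr : {p : Y × A // q p.1 = g p.2} → Y)
    (hpr : pr = fun p => p.val.1)
    (h : IsProperMap pr) : IsProperMap g := by
  subst hpr
  rw [isProperMap_iff_ultrafilter]
  refine ⟨hg_cont, fun 𝒰 x hx => ?_⟩
  obtain ⟨y, hy⟩ := hq_surj x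
  let g' : {p : Y × A // q p.1 = g p.2} → A := fun p => p.val.2
  have hg' : Continuous g' := continuous_snd.comp continuous_subtype_val
  set F : Filter {p : Y × A // q p.1 = g p.2} :=
    Filter.comap g' ↑𝒰 ⊓ Filter.comap (fun p => p.val.1) (nhds y) with hF
  have hne : F.NeBot := by
    rw [hF, Filter.inf_neBot_iff]
    intro s hs t ht
    obtain ⟨U, hU, hUs⟩ := hs
    obtain ⟨V, hV, hVt⟩ := ht
    have hqV : q '' V ∈ nhds x := by
      rw [← hy]; exact hq_open.image_mem_nhds hV
    have h1 : g ⁻¹' (q '' V) ∩ U ∈ 𝒰 := Filter.inter_mem (hx hqV) hU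
    obtain ⟨a, ⟨⟨v, hvV, hva⟩, haU⟩⟩ := 𝒰.nonempty_of_mem h1
    exact ⟨⟨(v, a), hva⟩, hUs haU, hVt hvV⟩
  have h𝒱F : ↑(Ultrafilter.of F) ≤ F := Ultrafilter.of_le F
  have hmap : Filter.Tendsto (fun p : {p : Y × A // q p.1 = g p.2} => p.val.1)
      (Ultrafilter.of F) (nhds y) :=
    (Filter.map_mono (h𝒱F.trans inf_le_right)).trans Filter.map_comap_le
  obtain ⟨p, hp_eq, hp_le⟩ := (isProperMap_iff_ultrafilter.mp h).2 hmap
  have hmapg' : (Ultrafilter.map g' (Ultrafilter.of F) : Filter A) = ↑𝒰 := by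
    apply Ultrafilter.unique
    · exact (Filter.map_mono (h𝒱F.trans inf_le_left)).trans Filter.map_comap_le
    · exact (Ultrafilter.map g' (Ultrafilter.of F)).neBot
  refine ⟨g' p, ?_, ?_⟩
  · have h2 : q p.val.1 = g (g' p) := p.property
    rw [← h2]
    rw [show p.val.1 = y from hp_eq, hy]
  · calc (𝒰 : Filter A) = Filter.map g' ↑(Ultrafilter.of F) := hmapg'.symm
      _ ≤ Filter.map g' (nhds p) := Filter.map_mono hp_le
      _ ≤ nhds (g' p) := hg'.continuousAt
end

section
/- Let q : Y → X be a proper surjective map of topological spaces and let g : A → X be a continuous map. Form the pullback P = {p : Y × A // q p.1 = g p.2} with the subspace topology, and let pr : P → Y be the first projection. If pr is a proper map, then g is a proper map. (Topological analogue, for the proper-surjection covers allowed as effective descent morphisms, of Proposition: proper maps descend along effective descent morphisms.) -/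
/-!
The square `q ∘ Pullback.fst = g ∘ Pullback.snd` exhibits `g ∘ Pullback.snd` as the proper map
`q ∘ Pullback.fst`. Since `q` is surjective, so is `Pullback.snd`, and a continuous map that
becomes proper after precomposition with a continuous surjection is proper.
-/

open Function

lemma Function.Pullback.snd_surjective {X Y Z : Type*} {f : X → Y} {g : Z → Y}
    (hf : Surjective f) : Surjective (Pullback.snd : f.Pullback g → Z) := fun z ↦
  let ⟨x, hx⟩ := hf (g z)
  ⟨⟨(x, z), hx⟩, rfl⟩

lemma Function.Pullback.continuous_snd {X Y Z : Type*} [TopologicalSpace X]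
    [TopologicalSpace Z] {f : X → Y} {g : Z → Y} :
    Continuous (Pullback.snd : f.Pullback g → Z) :=
  continuous_subtype_val.snd

lemma IsProperMap.of_isProperMap_pullback_fst {X Y A : Type*} [TopologicalSpace X]
    [TopologicalSpace Y] [TopologicalSpace A] {q : Y → X} {g : A → X}
    (hq : IsProperMap q) (hq_surj : Surjective q) (hg : Continuous g)
    (hfst : IsProperMap (Pullback.fst : q.Pullback g → Y)) : IsProperMap g := by
  have hsq : IsProperMap (g ∘ Pullback.snd) := pullback_comm_sq q g ▸ hq.comp hfst
  exact isProperMap_of_comp_of_surj Pullback.continuous_snd hg hsq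
    (Pullback.snd_surjective hq_surj)

/-- Topological analogue of "proper maps descend along effective descent morphisms",
for proper-surjection covers: if `q : Y → X` is a proper surjection,
`g : A → X` is continuous, and the pullback projection `pr : P → Y` is proper,
then `g` is proper. -/
theorem proper_descends_along_proper_surjection
    {X Y A : Type*} [TopologicalSpace X] [TopologicalSpace Y] [TopologicalSpace A]
    (q : Y → X) (hq_proper : IsProperMap q) (hq_surj : Function.Surjective q)
    (g : A → X) (hg_cont : Continuous g)
    (pr : {p : Y × A // q p.1 = g p.2} → Y)
    (hpr : pr = fun p => p.val.1)
    (h : IsProperMap pr) : IsProperMap g := by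
  subst hpr
  exact hq_proper.of_isProperMap_pullback_fst hq_surj hg_cont h
end

section
/- Let f : Y ⟶ X be a morphism in the category TopCat of topological spaces such that the underlying function of f is surjective and f is a proper map. Then f is an effective descent morphism: the pullback functor Over.pullback f : Over X ⥤ Over Y is monadic. (This is the fact, used throughout the paper, that proper surjections are effective descent morphisms; here in its topological form.) -/
/-!
A base change `A ×_X Y → A` of the proper surjection `f` is again a proper surjection, hence a
quotient map; this makes `Over.pullback f` faithful and lets morphisms between pulled-back objects
that respect the descent data descend, so the comparison functor is full.

For essential surjectivity, an algebra `p : W → Y` of the monad `f^* f_!` is a continuous action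
`W ×_X Y → W` moving points between the fibres of `p`. Let `Q` be the quotient of `W` by its orbits;
`f ∘ p` descends to `Q → X`, and `w ↦ (⟦w⟧, p w)` is a continuous bijection `W → Q ×_X Y`. The
properness of `f` makes `W → Q` closed with compact fibres, i.e. proper, so its base change
`W ×_X Y → Q ×_X Y` is a quotient map; the action factors through it as the inverse bijection,
which is therefore continuous.
-/

open CategoryTheory Limits Topology Function

universe u

section ProperBaseChange

variable {W V Y X : Type*} [TopologicalSpace W] [TopologicalSpace V] [TopologicalSpace Y]

theorem IsProperMap.pullback_fst [TopologicalSpace X] {f : Y → X} (hf : IsProperMap f) {g : W → X}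
    (hg : Continuous g) : IsProperMap (Pullback.fst : g.Pullback f → W) := by
  let graph : Set (W × X) := {q | g q.1 = q.2}
  let e : graph ≃ₜ W :=
    { toFun := fun q => q.1.1
      invFun := fun w => ⟨(w, g w), rfl⟩
      left_inv := fun q => Subtype.ext (Prod.ext rfl q.2)
      right_inv := fun _ => rfl
      continuous_toFun := by fun_prop
      continuous_invFun := by fun_prop }
  exact e.isProperMap.comp ((isProperMap_id.prodMap hf).restrictPreimage graph)

theorem IsProperMap.pullback_map_left {q : W → V} (hq : IsProperMap q) (g : V → X) (f : Y → X) :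
    IsProperMap (fun z : (g ∘ q).Pullback f => (⟨(q z.1.1, z.1.2), z.2⟩ : g.Pullback f)) :=
  (hq.prodMap isProperMap_id).restrictPreimage {z : V × Y | g z.1 = f z.2}

end ProperBaseChange

section Descent

variable {W Y X : Type*} [TopologicalSpace W] [TopologicalSpace Y]

/-- An algebra structure on `p : W → Y` for the monad `f^* f_!`, written out pointwise:
`act w y` moves `w` into the fibre of `p` over `y`. -/
structure DescentDatum (f : Y → X) (p : W → Y) where
  act : ∀ w y, f (p w) = f y → W
  continuous_act : Continuous fun z : (f ∘ p).Pullback f => act z.1.1 z.1.2 z.2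
  p_act : ∀ w y h, p (act w y h) = y
  act_self : ∀ w, act w (p w) rfl = w
  act_act : ∀ w y₁ y₂ (h₁ : f (p w) = f y₁) (h₂ : f y₁ = f y₂),
    act (act w y₁ h₁) y₂ (by rw [p_act]; exact h₂) = act w y₂ (h₁.trans h₂)

namespace DescentDatum

variable {f : Y → X} {p : W → Y} (D : DescentDatum f p)

def setoid : Setoid W where
  r w w' := ∃ y h, D.act w y h = w'
  iseqv :=
    { refl w := ⟨p w, rfl, D.act_self w⟩
      symm := by
        rintro w _ ⟨y, h, rfl⟩
        refine ⟨p w, by rw [D.p_act]; exact h.symm, ?_⟩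
        rw [D.act_act w y (p w) h h.symm, D.act_self]
      trans := by
        rintro w _ _ ⟨y, h, rfl⟩ ⟨y', h', rfl⟩
        rw [D.p_act] at h'
        exact ⟨y', h.trans h', (D.act_act w y y' h h').symm⟩ }

abbrev Descended : Type _ := Quotient D.setoid

def proj : W → D.Descended := Quotient.mk D.setoid

lemma proj_eq_proj_iff {w w' : W} : D.proj w = D.proj w' ↔ ∃ y h, D.act w y h = w' := Quotient.eq

lemma proj_act (w : W) (y : Y) (h : f (p w) = f y) : D.proj (D.act w y h) = D.proj w :=
  (D.proj_eq_proj_iff.mpr ⟨y, h, rfl⟩).symm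

lemma isQuotientMap_proj : IsQuotientMap D.proj := isQuotientMap_quotient_mk'

lemma proj_surjective : Surjective D.proj := Quotient.mk_surjective

def base : D.Descended → X :=
  Quotient.lift (f ∘ p) fun w _ ⟨y, h, hw⟩ => by
    subst hw
    exact h.trans (congrArg f (D.p_act w y h)).symm

lemma continuous_base [TopologicalSpace X] (hf : Continuous f) (hp : Continuous p) :
    Continuous D.base :=
  D.isQuotientMap_proj.continuous_iff.mpr (hf.comp hp)

lemma preimage_image_proj (F : Set W) :
    D.proj ⁻¹' (D.proj '' F) =
      Pullback.fst '' ((fun z : (f ∘ p).Pullback f => D.act z.1.1 z.1.2 z.2) ⁻¹' F) := by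
  ext w'
  constructor
  · rintro ⟨w, hw, hww'⟩
    obtain ⟨y, h, rfl⟩ := D.proj_eq_proj_iff.mp hww'.symm
    exact ⟨⟨(w', y), h⟩, hw, rfl⟩
  · rintro ⟨z, hz, rfl⟩
    exact ⟨_, hz, D.proj_act _ _ _⟩

lemma isClosedMap_proj [TopologicalSpace X] (hf : IsProperMap f) (hp : Continuous p) :
    IsClosedMap D.proj := by
  intro F hF
  rw [← D.isQuotientMap_proj.isClosed_preimage, preimage_image_proj]
  exact (hf.pullback_fst (hf.continuous.comp hp)).isClosedMap _ (hF.preimage D.continuous_act)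

lemma isCompact_proj_preimage_singleton [TopologicalSpace X] (hf : IsProperMap f)
    (a : D.Descended) : IsCompact (D.proj ⁻¹' {a}) := by
  obtain ⟨w, rfl⟩ := D.proj_surjective a
  have hfiber : IsCompact (f ⁻¹' {f (p w)}) := hf.isCompact_preimage isCompact_singleton
  have : D.proj ⁻¹' {D.proj w} = Set.range fun y : f ⁻¹' {f (p w)} => D.act w y y.2.symm := by
    ext w'
    simp only [Set.mem_preimage, Set.mem_singleton_iff, Set.mem_range]
    constructor
    · intro hw'
      obtain ⟨y, h, rfl⟩ := D.proj_eq_proj_iff.mp hw'.symm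
      exact ⟨⟨y, h.symm⟩, rfl⟩
    · rintro ⟨y, rfl⟩
      exact D.proj_act _ _ _
  rw [this]
  have : CompactSpace (f ⁻¹' {f (p w)}) := isCompact_iff_compactSpace.mp hfiber
  exact isCompact_range (D.continuous_act.comp
    (f := fun y : f ⁻¹' {f (p w)} => (⟨(w, y.1), y.2.symm⟩ : (f ∘ p).Pullback f)) (by fun_prop))

lemma isProperMap_proj [TopologicalSpace X] (hf : IsProperMap f) (hp : Continuous p) :
    IsProperMap D.proj :=
  isProperMap_iff_isClosedMap_and_compact_fibers.mpr ⟨D.isQuotientMap_proj.continuous,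
    D.isClosedMap_proj hf hp, D.isCompact_proj_preimage_singleton hf⟩

def toPullback (w : W) : D.base.Pullback f := ⟨(D.proj w, p w), rfl⟩

lemma toPullback_act (w : W) (y : Y) (h : f (p w) = f y) :
    D.toPullback (D.act w y h) = ⟨(D.proj w, y), h⟩ :=
  Subtype.ext (Prod.ext (D.proj_act w y h) (D.p_act w y h))

lemma bijective_toPullback : Bijective D.toPullback := by
  refine ⟨fun w w' hww' => ?_, ?_⟩
  · obtain ⟨y, h, rfl⟩ := D.proj_eq_proj_iff.mp (congrArg (·.1.1) hww')
    have hy : p w = y := (congrArg (·.1.2) hww').trans (D.p_act w y h)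
    subst hy
    exact (D.act_self w).symm
  · rintro ⟨⟨a, y⟩, h⟩
    obtain ⟨w, rfl⟩ := D.proj_surjective a
    exact ⟨D.act w y h, D.toPullback_act w y h⟩

lemma isQuotientMap_pullbackMap_proj [TopologicalSpace X] (hf : IsProperMap f)
    (hp : Continuous p) : IsQuotientMap
      (fun z : (f ∘ p).Pullback f => (⟨(D.proj z.1.1, z.1.2), z.2⟩ : D.base.Pullback f)) := by
  have hproper := (D.isProperMap_proj hf hp).pullback_map_left D.base f
  refine hproper.isClosedMap.isQuotientMap hproper.continuous ?_
  rintro ⟨⟨a, y⟩, h⟩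
  obtain ⟨w, rfl⟩ := D.proj_surjective a
  exact ⟨⟨(w, y), h⟩, rfl⟩

noncomputable def homeomorph [TopologicalSpace X] (hf : IsProperMap f) (hp : Continuous p) :
    W ≃ₜ D.base.Pullback f where
  toEquiv := Equiv.ofBijective D.toPullback D.bijective_toPullback
  continuous_toFun := (D.isQuotientMap_proj.continuous.prodMk hp).subtype_mk _
  continuous_invFun := by
    rw [(D.isQuotientMap_pullbackMap_proj hf hp).continuous_iff]
    convert D.continuous_act using 1
    ext z
    exact (Equiv.ofBijective _ D.bijective_toPullback).symm_apply_eq.mpr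
      (D.toPullback_act _ _ _).symm

end DescentDatum

end Descent

namespace TopCat

section PullbackPoints

variable {A B C : TopCat.{u}} {g : A ⟶ C} {h : B ⟶ C}

lemma pullback_condition_apply (z : ↑(pullback g h)) :
    g (pullback.fst g h z) = h (pullback.snd g h z) :=
  ConcreteCategory.congr_hom pullback.condition z

lemma pullback_ext_apply {z z' : ↑(pullback g h)} (hfst : pullback.fst g h z = pullback.fst g h z')
    (hsnd : pullback.snd g h z = pullback.snd g h z') : z = z' :=
  (homeoOfIso (pullbackIsoProdSubtype g h)).injective (Subtype.ext (Prod.ext hfst hsnd))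

lemma eq_pullbackIsoProdSubtype_inv_apply {z : ↑(pullback g h)} {a : A} {b : B} {hab : g a = h b}
    (ha : pullback.fst g h z = a) (hb : pullback.snd g h z = b) :
    z = (pullbackIsoProdSubtype g h).inv ⟨(a, b), hab⟩ :=
  pullback_ext_apply (ha.trans (pullbackIsoProdSubtype_inv_fst_apply g h ⟨(a, b), hab⟩).symm)
    (hb.trans (pullbackIsoProdSubtype_inv_snd_apply g h ⟨(a, b), hab⟩).symm)

lemma isProperMap_pullback_fst (hh : IsProperMap h) : IsProperMap (pullback.fst g h) :=
  (hh.pullback_fst g.hom.continuous).comp (homeoOfIso (pullbackIsoProdSubtype g h)).isProperMap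

lemma surjective_pullback_fst (hs : Surjective h) : Surjective (pullback.fst g h) := by
  intro a
  obtain ⟨b, hb⟩ := hs (g a)
  exact ⟨_, pullbackIsoProdSubtype_inv_fst_apply g h ⟨(a, b), hb.symm⟩⟩

lemma isQuotientMap_pullback_fst (hh : IsProperMap h) (hs : Surjective h) :
    IsQuotientMap (pullback.fst g h) :=
  (isProperMap_pullback_fst hh).isClosedMap.isQuotientMap (isProperMap_pullback_fst hh).continuous
    (surjective_pullback_fst hs)

end PullbackPoints

section OverPullback

variable {Y X : TopCat.{u}} (f : Y ⟶ X)

lemma overPullback_map_fst {A₁ A₂ : Over X} (k : A₁ ⟶ A₂) :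
    ((Over.pullback f).map k).left ≫ pullback.fst A₂.hom f = pullback.fst A₁.hom f ≫ k.left :=
  pullback.lift_fst _ _ _

lemma overPullback_map_snd {A₁ A₂ : Over X} (k : A₁ ⟶ A₂) :
    ((Over.pullback f).map k).left ≫ pullback.snd A₂.hom f = pullback.snd A₁.hom f :=
  pullback.lift_snd _ _ _

lemma overPullback_faithful (hs : Surjective f) : (Over.pullback f).Faithful where
  map_injective {A₁ _} k k' hkk' := by
    have : Epi (pullback.fst A₁.hom f) := (epi_iff_surjective _).mpr (surjective_pullback_fst hs)
    ext1
    rw [← cancel_epi (pullback.fst A₁.hom f), ← overPullback_map_fst, ← overPullback_map_fst, hkk']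

lemma overPullback_map_fst_apply {A₁ A₂ : Over X} (k : A₁ ⟶ A₂) (z : ↑(pullback A₁.hom f)) :
    pullback.fst A₂.hom f (((Over.pullback f).map k).left z) = k.left (pullback.fst A₁.hom f z) :=
  ConcreteCategory.congr_hom (overPullback_map_fst f k) z

lemma overPullback_map_snd_apply {A₁ A₂ : Over X} (k : A₁ ⟶ A₂) (z : ↑(pullback A₁.hom f)) :
    pullback.snd A₂.hom f (((Over.pullback f).map k).left z) = pullback.snd A₁.hom f z :=
  ConcreteCategory.congr_hom (overPullback_map_snd f k) z

lemma comparison_obj_a_fst_apply (A : Over X) (ζ : ↑(pullback (pullback.snd A.hom f ≫ f) f)) :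
    pullback.fst A.hom f (((Monad.comparison (Over.mapPullbackAdj f)).obj A).a.left ζ) =
      pullback.fst A.hom f (pullback.fst _ f ζ) :=
  overPullback_map_fst_apply f ((Over.mapPullbackAdj f).counit.app A) ζ

lemma comparison_obj_a_snd_apply (A : Over X) (ζ : ↑(pullback (pullback.snd A.hom f ≫ f) f)) :
    pullback.snd A.hom f (((Monad.comparison (Over.mapPullbackAdj f)).obj A).a.left ζ) =
      pullback.snd _ f ζ :=
  overPullback_map_snd_apply f ((Over.mapPullbackAdj f).counit.app A) ζ

lemma comparison_map_fst_congr {A₁ A₂ : Over X}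
    (φ : (Monad.comparison (Over.mapPullbackAdj f)).obj A₁ ⟶
      (Monad.comparison (Over.mapPullbackAdj f)).obj A₂)
    {z z' : ↑(pullback A₁.hom f)} (h : pullback.fst A₁.hom f z = pullback.fst A₁.hom f z') :
    pullback.fst A₂.hom f (φ.f.left z) = pullback.fst A₂.hom f (φ.f.left z') := by
  -- the algebra structure of `A₁` sends `ζ = (z, snd z')` to `z'`
  let ζ := (pullbackIsoProdSubtype (pullback.snd A₁.hom f ≫ f) f).inv
    ⟨(z, pullback.snd A₁.hom f z'), (pullback_condition_apply z).symm.trans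
      ((congrArg A₁.hom h).trans (pullback_condition_apply z'))⟩
  have hζ : pullback.fst _ f ζ = z := pullbackIsoProdSubtype_inv_fst_apply _ _ _
  have hζ' : ((Monad.comparison (Over.mapPullbackAdj f)).obj A₁).a.left ζ = z' :=
    pullback_ext_apply ((comparison_obj_a_fst_apply f A₁ ζ).trans (by rw [hζ, h]))
      ((comparison_obj_a_snd_apply f A₁ ζ).trans (pullbackIsoProdSubtype_inv_snd_apply _ _ _))
  calc pullback.fst A₂.hom f (φ.f.left z)
      = pullback.fst A₂.hom f (φ.f.left (pullback.fst _ f ζ)) :=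
        congrArg (fun t => pullback.fst A₂.hom f (φ.f.left t)) hζ.symm
    _ = pullback.fst A₂.hom f (((Monad.comparison (Over.mapPullbackAdj f)).obj A₂).a.left
          (((Over.mapPullbackAdj f).toMonad.map φ.f).left ζ)) :=
        ((comparison_obj_a_fst_apply f A₂ _).trans
          (congrArg _ (overPullback_map_fst_apply f ((Over.map f).map φ.f) ζ))).symm
    _ = pullback.fst A₂.hom f (φ.f.left z') := by
        rw [← hζ']
        exact congrArg _ (ConcreteCategory.congr_hom (congrArg Over.Hom.left φ.h) ζ)

lemma comparison_full (hf : IsProperMap f) (hs : Surjective f) :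
    (Monad.comparison (Over.mapPullbackAdj f)).Full where
  map_surjective {A₁ A₂} φ := by
    have hq := isQuotientMap_pullback_fst (g := A₁.hom) hf hs
    let φ₀ : A₁.left ⟶ A₂.left := ofHom <| hq.lift (φ.f.left ≫ pullback.fst A₂.hom f).hom
      fun _ _ => comparison_map_fst_congr f φ
    have hφ₀ : pullback.fst A₁.hom f ≫ φ₀ = φ.f.left ≫ pullback.fst A₂.hom f :=
      ConcreteCategory.ext (hq.lift_comp _ _)
    have hsnd : φ.f.left ≫ pullback.snd A₂.hom f = pullback.snd A₁.hom f := Over.w φ.f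
    have hw : φ₀ ≫ A₂.hom = A₁.hom := by
      ext a
      obtain ⟨z, rfl⟩ := surjective_pullback_fst (g := A₁.hom) hs a
      calc A₂.hom (φ₀ (pullback.fst A₁.hom f z))
          = A₂.hom (pullback.fst A₂.hom f (φ.f.left z)) :=
            congrArg A₂.hom (ConcreteCategory.congr_hom hφ₀ z)
        _ = f (pullback.snd A₂.hom f (φ.f.left z)) := pullback_condition_apply _
        _ = f (pullback.snd A₁.hom f z) := congrArg f (ConcreteCategory.congr_hom hsnd z)
        _ = A₁.hom (pullback.fst A₁.hom f z) := (pullback_condition_apply z).symm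
    refine ⟨Over.homMk φ₀ hw, Monad.Algebra.Hom.ext (Over.OverMorphism.ext ?_)⟩
    apply pullback.hom_ext
    · exact (overPullback_map_fst f _).trans hφ₀
    · exact (overPullback_map_snd f _).trans hsnd.symm

end OverPullback

section Algebra

variable {Y X : TopCat.{u}} {f : Y ⟶ X}

lemma mapPullbackAdj_unit_app_left_apply (W : Over Y) (w : W.left) :
    ((Over.mapPullbackAdj f).unit.app W).left w =
      (pullbackIsoProdSubtype (W.hom ≫ f) f).inv ⟨(w, W.hom w), rfl⟩ :=
  eq_pullbackIsoProdSubtype_inv_apply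
    (ConcreteCategory.congr_hom (pullback.lift_fst _ _ _) w)
    (ConcreteCategory.congr_hom (pullback.lift_snd _ _ _) w)

noncomputable def algebraDescentDatum (S : (Over.mapPullbackAdj f).toMonad.Algebra) :
    DescentDatum f S.A.hom where
  act w y h := S.a.left ((pullbackIsoProdSubtype (S.A.hom ≫ f) f).inv ⟨(w, y), h⟩)
  continuous_act := S.a.left.hom.continuous.comp <|
    (pullbackIsoProdSubtype (S.A.hom ≫ f) f).inv.hom.continuous.comp (by fun_prop)
  p_act w y h := (ConcreteCategory.congr_hom (Over.w S.a) _).trans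
    (pullbackIsoProdSubtype_inv_snd_apply _ _ _)
  act_self w := by
    rw [← mapPullbackAdj_unit_app_left_apply]
    exact ConcreteCategory.congr_hom (congrArg Over.Hom.left S.unit) w
  act_act w y₁ y₂ h₁ h₂ := by
    let inner := (pullbackIsoProdSubtype (S.A.hom ≫ f) f).inv ⟨(w, y₁), h₁⟩
    have h_inner : pullback.snd _ f inner = y₁ := pullbackIsoProdSubtype_inv_snd_apply _ _ _
    let ζ := (pullbackIsoProdSubtype (pullback.snd (S.A.hom ≫ f) f ≫ f) f).inv
      ⟨(inner, y₂), (congrArg f h_inner).trans h₂⟩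
    have hζ₁ : pullback.fst _ f ζ = inner := pullbackIsoProdSubtype_inv_fst_apply _ _ _
    have hζ₂ : pullback.snd _ f ζ = y₂ := pullbackIsoProdSubtype_inv_snd_apply _ _ _
    have h_map : ((Over.mapPullbackAdj f).toMonad.map S.a).left ζ =
        (pullbackIsoProdSubtype (S.A.hom ≫ f) f).inv ⟨(S.a.left inner, y₂),
          (congrArg f ((ConcreteCategory.congr_hom (Over.w S.a) inner).trans h_inner)).trans h₂⟩ :=
      eq_pullbackIsoProdSubtype_inv_apply
        ((overPullback_map_fst_apply f ((Over.map f).map S.a) ζ).trans (congrArg S.a.left hζ₁))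
        ((overPullback_map_snd_apply f ((Over.map f).map S.a) ζ).trans hζ₂)
    let counit := (Over.mapPullbackAdj f).counit.app ((Over.map f).obj S.A)
    have h_mult : ((Over.mapPullbackAdj f).toMonad.μ.app S.A).left ζ =
        (pullbackIsoProdSubtype (S.A.hom ≫ f) f).inv ⟨(w, y₂), h₁.trans h₂⟩ :=
      eq_pullbackIsoProdSubtype_inv_apply
        ((overPullback_map_fst_apply f counit ζ).trans
          ((congrArg _ hζ₁).trans (pullbackIsoProdSubtype_inv_fst_apply _ _ _)))
        ((overPullback_map_snd_apply f counit ζ).trans hζ₂)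
    calc _ = S.a.left (((Over.mapPullbackAdj f).toMonad.map S.a).left ζ) :=
          congrArg S.a.left h_map.symm
      _ = S.a.left (((Over.mapPullbackAdj f).toMonad.μ.app S.A).left ζ) :=
          (ConcreteCategory.congr_hom (congrArg Over.Hom.left S.assoc) ζ).symm
      _ = _ := congrArg S.a.left h_mult

noncomputable def algebraDescent (S : (Over.mapPullbackAdj f).toMonad.Algebra) : Over X :=
  Over.mk <| ofHom ⟨(algebraDescentDatum S).base,
    (algebraDescentDatum S).continuous_base f.hom.continuous S.A.hom.hom.continuous⟩

noncomputable def algebraIsoPullbackDescent (hf : IsProperMap f)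
    (S : (Over.mapPullbackAdj f).toMonad.Algebra) :
    S.A ≅ (Over.pullback f).obj (algebraDescent S) :=
  Over.isoMk (isoOfHomeo ((algebraDescentDatum S).homeomorph hf S.A.hom.hom.continuous) ≪≫
    (pullbackIsoProdSubtype (algebraDescent S).hom f).symm) (by
      ext w
      exact pullbackIsoProdSubtype_inv_snd_apply _ _ _)

lemma algebraIsoPullbackDescent_fst_apply (hf : IsProperMap f)
    (S : (Over.mapPullbackAdj f).toMonad.Algebra) (w : S.A.left) :
    pullback.fst _ f ((algebraIsoPullbackDescent hf S).hom.left w) =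
      (algebraDescentDatum S).proj w :=
  pullbackIsoProdSubtype_inv_fst_apply _ _ _

lemma algebraIsoPullbackDescent_snd_apply (hf : IsProperMap f)
    (S : (Over.mapPullbackAdj f).toMonad.Algebra) (w : S.A.left) :
    pullback.snd _ f ((algebraIsoPullbackDescent hf S).hom.left w) = S.A.hom w :=
  pullbackIsoProdSubtype_inv_snd_apply _ _ _

lemma algebra_a_apply (S : (Over.mapPullbackAdj f).toMonad.Algebra)
    (ζ : ↑(pullback (S.A.hom ≫ f) f)) :
    S.a.left ζ = (algebraDescentDatum S).act (pullback.fst _ f ζ) (pullback.snd _ f ζ)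
      (pullback_condition_apply ζ) :=
  congrArg S.a.left (eq_pullbackIsoProdSubtype_inv_apply rfl rfl)

noncomputable def comparisonObjDescentIso (hf : IsProperMap f)
    (S : (Over.mapPullbackAdj f).toMonad.Algebra) :
    (Monad.comparison (Over.mapPullbackAdj f)).obj (algebraDescent S) ≅ S :=
  Iso.symm <| Monad.Algebra.isoMk (algebraIsoPullbackDescent hf S) <| by
    ext (ζ : ↑(pullback (S.A.hom ≫ f) f))
    let D := algebraDescentDatum S
    let e := algebraIsoPullbackDescent hf S
    have h_map_fst : pullback.fst _ f (((Over.mapPullbackAdj f).toMonad.map e.hom).left ζ) =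
        e.hom.left (pullback.fst _ f ζ) :=
      overPullback_map_fst_apply f ((Over.map f).map e.hom) ζ
    apply pullback_ext_apply
    · have h_act : D.proj (S.a.left ζ) = D.proj (pullback.fst _ f ζ) := by
        rw [algebra_a_apply, D.proj_act]
      exact (comparison_obj_a_fst_apply f _ _).trans <| (congrArg _ h_map_fst).trans <|
        (algebraIsoPullbackDescent_fst_apply hf S _).trans <| h_act.symm.trans
          (algebraIsoPullbackDescent_fst_apply hf S _).symm
    · calc _ = pullback.snd _ f ζ :=
            (comparison_obj_a_snd_apply f _ _).trans
              (overPullback_map_snd_apply f ((Over.map f).map e.hom) ζ)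
        _ = S.A.hom (S.a.left ζ) := (ConcreteCategory.congr_hom (Over.w S.a) ζ).symm
        _ = _ := (algebraIsoPullbackDescent_snd_apply hf S _).symm

lemma comparison_essSurj (hf : IsProperMap f) :
    (Monad.comparison (Over.mapPullbackAdj f)).EssSurj :=
  ⟨fun S => ⟨_, ⟨comparisonObjDescentIso hf S⟩⟩⟩

end Algebra

end TopCat

/-- Proper surjections of topological spaces are effective descent morphisms:
the pullback functor `Over X ⥤ Over Y` is monadic. -/
theorem properSurjection_effectiveDescent
    {Y X : TopCat} (f : Y ⟶ X)
    (hsurj : Function.Surjective f) (hproper : IsProperMap f) :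
    Nonempty (MonadicRightAdjoint (Over.pullback f)) :=
  have := TopCat.overPullback_faithful f hsurj
  ⟨{ L := Over.map f
     adj := Over.mapPullbackAdj f
     eqv :=
      { full := TopCat.comparison_full f hproper hsurj
        essSurj := TopCat.comparison_essSurj hproper } }⟩
end

section
/- Let C be a category with all pullbacks and let f : Y ⟶ X be an effective descent morphism, i.e. the pullback functor Over.pullback f : Over X ⥤ Over Y is monadic. Then for any morphism g : Z ⟶ X, the pullback of f along g — that is, the second projection pullback f g ⟶ Z — is again an effective descent morphism. (This is the paper's assertion that effective descent morphisms are pullback stable, 'essentially because monadicity criteria are pullback stable'.) -/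
/-!
By Beck's theorem, `Over.pullback f'` for `f' := pullback.snd f g` is monadic as soon as it
creates coequalizers of `Over.pullback f'`-split pairs, since it is a right adjoint. The pasting
law for pullbacks gives the Beck–Chevalley isomorphism
`Over.pullback f' ⋙ Over.map (pullback.fst f g) ≅ Over.map g ⋙ Over.pullback f`.
Every `Over.map h` creates colimits, being the forgetful functor of an iterated slice, and it
preserves them, being a left adjoint. So `Over.map g` turns an `Over.pullback f'`-split pair into
an `Over.pullback f`-split pair, whose coequalizer `Over.pullback f` creates by monadicity, and the
Beck–Chevalley square carries this back to `Over.pullback f'`.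
-/

open CategoryTheory CategoryTheory.Limits

noncomputable section

namespace CategoryTheory

universe w w' v₁ v₂ v₃ u₁ u₂ u₃ u₄

variable {C : Type u₁} [Category.{v₁} C] {J : Type w} [Category.{w'} J]

def IsSplitCoequalizer.ofIso {X Y X' Y' Z : C} {f g : X ⟶ Y} {π : Y ⟶ Z}
    (q : IsSplitCoequalizer f g π) (i : X' ≅ X) (j : Y' ≅ Y) {f' g' : X' ⟶ Y'}
    (hf : f' ≫ j.hom = i.hom ≫ f) (hg : g' ≫ j.hom = i.hom ≫ g) :
    IsSplitCoequalizer f' g' (j.hom ≫ π) where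
  rightSection := q.rightSection ≫ j.inv
  leftSection := j.hom ≫ q.leftSection ≫ i.inv
  condition := by simp only [← Category.assoc, hf, hg]; simp [q.condition]
  rightSection_π := by simp
  leftSection_bottom := by rw [← cancel_mono j.hom]; simp [hg]
  leftSection_top := by rw [← cancel_mono j.hom]; simp [hf]

abbrev Limits.createsColimitOfCreatesColimitComp {D : Type u₂} [Category.{v₂} D] {E : Type u₃}
    [Category.{v₃} E] {K : J ⥤ C} {F : C ⥤ D} {V : D ⥤ E} [CreatesColimit K (F ⋙ V)]
    [PreservesColimit (K ⋙ F) V] [ReflectsColimit (K ⋙ F) V] : CreatesColimit K F where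
  reflects he := ⟨isColimitOfReflects (F ⋙ V) (isColimitOfPreserves V he)⟩
  lifts _ hc :=
    let hVc := isColimitOfPreserves V hc
    { liftedCocone := liftColimit (K := K) (F := F ⋙ V) hVc
      validLift := IsColimit.uniqueUpToIso
        (isColimitOfReflects V
          (hVc.ofIsoColimit (liftedColimitMapsToOriginal (K := K) (F := F ⋙ V) hVc).symm)) hc }

section

variable {C' : Type u₂} [Category.{v₂} C'] {D : Type u₃} [Category.{v₁} D]
  {E : Type u₄} [Category.{v₂} E] {U : C ⥤ C'} {G : C' ⥤ E} {G' : C ⥤ D} {V : D ⥤ E}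

theorem Functor.isSplitPair_map_of_iso (κ : G' ⋙ V ≅ U ⋙ G) {A B : C} (a b : A ⟶ B)
    [G'.IsSplitPair a b] : G.IsSplitPair (U.map a) (U.map b) :=
  ⟨_, _, ⟨(HasSplitCoequalizer.isSplitCoequalizer (V.map (G'.map a)) (V.map (G'.map b))).ofIso
    (κ.app A).symm (κ.app B).symm (κ.inv.naturality a) (κ.inv.naturality b)⟩⟩

abbrev Limits.createsColimitOfIsoComp (κ : G' ⋙ V ≅ U ⋙ G) (K : J ⥤ C) [CreatesColimit K U]
    [CreatesColimit (K ⋙ U) G] [PreservesColimit (K ⋙ G') V] [ReflectsColimit (K ⋙ G') V] :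
    CreatesColimit K G' :=
  haveI : CreatesColimit K (G' ⋙ V) := createsColimitOfNatIso κ.symm
  createsColimitOfCreatesColimitComp (V := V)

abbrev Monad.createsColimitOfIsSplitPairOfIso (κ : G' ⋙ V ≅ U ⋙ G)
    [CreatesColimitOfIsSplitPair G] [CreatesColimitsOfShape WalkingParallelPair U]
    [PreservesColimitsOfShape WalkingParallelPair V]
    [ReflectsColimitsOfShape WalkingParallelPair V] : CreatesColimitOfIsSplitPair G' where
  out a b _ :=
    haveI := Functor.isSplitPair_map_of_iso κ a b
    haveI : CreatesColimit (parallelPair a b ⋙ U) G :=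
      createsColimitOfIsoDiagram (K₁ := parallelPair (U.map a) (U.map b)) G
        (diagramIsoParallelPair (parallelPair a b ⋙ U)).symm
    createsColimitOfIsoComp κ _

end

namespace Over

instance createsColimitsOfSizeMap {X Z : C} (h : Z ⟶ X) :
    CreatesColimitsOfSize.{w, w'} (Over.map h) :=
  haveI : CreatesColimitsOfSize.{w, w'} (iteratedSliceBackward (Over.mk h)) :=
    (iteratedSliceEquiv (Over.mk h)).inverse.createsColimitsOfIsEquivalence
  inferInstanceAs (CreatesColimitsOfSize (iteratedSliceBackward (Over.mk h) ⋙ forget _))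

def pullbackSndMapFstIso [HasPullbacks C] {X Y Z : C} (f : Y ⟶ X) (g : Z ⟶ X) :
    Over.pullback (pullback.snd f g) ⋙ Over.map (pullback.fst f g) ≅
      Over.map g ⋙ Over.pullback f :=
  NatIso.ofComponents
    (fun A => Over.isoMk ((IsPullback.of_hasPullback A.hom (pullback.snd f g)).paste_vert
      (IsPullback.of_hasPullback f g).flip).isoPullback (by simp))
    (fun u => by
      ext
      apply pullback.hom_ext <;>
        simp [pullback.lift_fst, pullback.lift_snd, pullback.lift_snd_assoc])

end Over

end CategoryTheory

end

/-- Effective descent morphisms are stable under pullback: if the pullback functor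
along `f : Y ⟶ X` is monadic, then so is the pullback functor along the pullback
of `f` along any `g : Z ⟶ X`. -/
theorem effectiveDescent_pullback_stable
    {C : Type*} [Category C] [HasPullbacks C]
    {Y X Z : C} (f : Y ⟶ X) (g : Z ⟶ X)
    (hf : Nonempty (MonadicRightAdjoint (Over.pullback f))) :
    Nonempty (MonadicRightAdjoint (Over.pullback (pullback.snd f g))) := by
  obtain ⟨hf⟩ := hf
  have : Monad.CreatesColimitOfIsSplitPair (Over.pullback f) :=
    ⟨fun a b _ => Monad.createsGSplitCoequalizersOfMonadic _ a b⟩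
  have := Monad.createsColimitOfIsSplitPairOfIso (Over.pullbackSndMapFstIso f g)
  exact ⟨Monad.monadicOfCreatesGSplitCoequalizers (Over.mapPullbackAdj _)⟩
end
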